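/- arXiv:2306.12157 — 7 statements merged into one kernel-verified Lean document; each statement's English description precedes it below -/
import Mathlib

section
/- For any vector y in R^3 with |y| > a > 0, the integral over the ball B_a = {y' : |y'| < a} of 1/|y - y'|^4 dy' equals (2π/(|y| - a)) · [1/(t+1) + ((t-1)/(2t))·log((t-1)/(t+1))] evaluated at t = |y|/a. -/
/-!
Since the integrand depends only on `‖y - y'‖` and the ball is invariant under the reflection
exchanging `y` and `z = (‖y‖, 0, 0)`, we may replace `y` by `z`. Slicing the ball by the planes
`x₀ = t` gives discs of radius `√(a² - t²)`, on which the integrand is the radial function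
`((R - t)² + r²)⁻²`, with elementary integral `π ((R - t)⁻² - (R² - 2Rt + a²)⁻¹)`. Integrating
this over `t ∈ (-a, a)` produces the rational and the logarithmic term.
-/

open MeasureTheory Real Set Metric

namespace EuclideanSpace

variable {n : ℕ}

noncomputable def consMeasurableEquiv (n : ℕ) :
    ℝ × EuclideanSpace ℝ (Fin n) ≃ᵐ EuclideanSpace ℝ (Fin (n + 1)) :=
  ((MeasurableEquiv.refl ℝ).prodCongr (MeasurableEquiv.toLp 2 _).symm).trans
    ((MeasurableEquiv.piFinSuccAbove (fun _ => ℝ) 0).symm.trans (MeasurableEquiv.toLp 2 _))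

lemma consMeasurableEquiv_apply (p : ℝ × EuclideanSpace ℝ (Fin n)) :
    consMeasurableEquiv n p = WithLp.toLp 2 (Fin.cons p.1 p.2) := by
  simp [consMeasurableEquiv, MeasurableEquiv.piFinSuccAbove_symm_apply]
  rfl

lemma measurePreserving_consMeasurableEquiv (n : ℕ) :
    MeasurePreserving (consMeasurableEquiv n) :=
  (MeasurePreserving.id volume |>.prod (PiLp.volume_preserving_ofLp _)).trans <|
    (volume_preserving_piFinSuccAbove (fun _ => ℝ) 0).symm.trans (PiLp.volume_preserving_toLp _)

lemma norm_toLp_cons_sq (t : ℝ) (v : EuclideanSpace ℝ (Fin n)) :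
    ‖(WithLp.toLp 2 (Fin.cons t v) : EuclideanSpace ℝ (Fin (n + 1)))‖ ^ 2 = t ^ 2 + ‖v‖ ^ 2 := by
  simp [EuclideanSpace.norm_sq_eq, Fin.sum_univ_succ]

lemma norm_toLp_cons_zero (t : ℝ) :
    ‖(WithLp.toLp 2 (Fin.cons t 0) : EuclideanSpace ℝ (Fin (n + 1)))‖ = |t| := by
  rw [← sq_eq_sq₀ (norm_nonneg _) (abs_nonneg t), norm_toLp_cons_sq, sq_abs]
  simp

lemma toLp_cons_sub_toLp_cons (s t : ℝ) (u v : EuclideanSpace ℝ (Fin n)) :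
    (WithLp.toLp 2 (Fin.cons s u) - WithLp.toLp 2 (Fin.cons t v) :
        EuclideanSpace ℝ (Fin (n + 1))) =
      WithLp.toLp 2 (Fin.cons (s - t) (u - v)) := by
  ext i
  cases i using Fin.cases <;> simp

lemma mem_ball_toLp_cons_iff {a t : ℝ} (ht : |t| < a) (v : EuclideanSpace ℝ (Fin n)) :
    (WithLp.toLp 2 (Fin.cons t v) : EuclideanSpace ℝ (Fin (n + 1))) ∈ ball 0 a ↔
      v ∈ ball 0 √(a ^ 2 - t ^ 2) := by
  have ha : 0 ≤ a := (abs_nonneg t).trans ht.le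
  rw [mem_ball_zero_iff, mem_ball_zero_iff, lt_sqrt (norm_nonneg v), lt_sub_iff_add_lt',
    ← norm_toLp_cons_sq, sq_lt_sq₀ (norm_nonneg _) ha]

lemma toLp_cons_notMem_ball {a t : ℝ} (ht : a ≤ |t|) (v : EuclideanSpace ℝ (Fin n)) :
    (WithLp.toLp 2 (Fin.cons t v) : EuclideanSpace ℝ (Fin (n + 1))) ∉ ball 0 a := by
  rw [mem_ball_zero_iff, not_lt]
  refine ht.trans ?_
  rw [← sq_le_sq₀ (abs_nonneg t) (norm_nonneg _), sq_abs, norm_toLp_cons_sq]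
  exact le_add_of_nonneg_right (sq_nonneg _)

variable {F : Type*} [NormedAddCommGroup F] [NormedSpace ℝ F]

lemma integral_eq_integral_integral_toLp_cons {f : EuclideanSpace ℝ (Fin (n + 1)) → F}
    (hf : Integrable f) :
    ∫ x, f x = ∫ t, ∫ v : EuclideanSpace ℝ (Fin n), f (WithLp.toLp 2 (Fin.cons t v)) := by
  have he := measurePreserving_consMeasurableEquiv n
  have hfe : Integrable (f ∘ consMeasurableEquiv n) (volume.prod volume) :=
    (he.integrable_comp_emb (MeasurableEquiv.measurableEmbedding _)).mpr hf
  rw [← he.integral_comp' f, Measure.volume_eq_prod,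
    integral_prod (fun p => f (consMeasurableEquiv n p)) hfe]
  simp only [consMeasurableEquiv_apply]

lemma setIntegral_ball_eq_integral_Ioo_setIntegral_ball {a : ℝ}
    {f : EuclideanSpace ℝ (Fin (n + 1)) → F} (hf : IntegrableOn f (ball 0 a)) :
    ∫ x in ball 0 a, f x = ∫ t in Ioo (-a) a,
      ∫ v in ball (0 : EuclideanSpace ℝ (Fin n)) √(a ^ 2 - t ^ 2),
        f (WithLp.toLp 2 (Fin.cons t v)) := by
  rw [← integral_indicator measurableSet_ball,
    integral_eq_integral_integral_toLp_cons (hf.integrable_indicator measurableSet_ball),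
    ← setIntegral_eq_integral_of_forall_compl_eq_zero]
  · refine setIntegral_congr_fun measurableSet_Ioo fun t ht => ?_
    rw [← integral_indicator measurableSet_ball]
    congr with v
    classical
    exact if_congr (mem_ball_toLp_cons_iff (abs_lt.2 ht) v) rfl rfl
  · intro t ht
    rw [mem_Ioo, ← abs_lt, not_lt] at ht
    simp [indicator_of_notMem (toLp_cons_notMem_ball ht _)]

end EuclideanSpace

open EuclideanSpace

lemma setIntegral_ball_comp_norm_sub_of_norm_eq {E F : Type*} [NormedAddCommGroup E]
    [InnerProductSpace ℝ E] [FiniteDimensional ℝ E] [MeasurableSpace E] [BorelSpace E]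
    [NormedAddCommGroup F] [NormedSpace ℝ F] (g : ℝ → F) (a : ℝ) {y z : E} (h : ‖z‖ = ‖y‖) :
    ∫ x in ball 0 a, g ‖y - x‖ = ∫ x in ball 0 a, g ‖z - x‖ := by
  set T := Submodule.reflection (ℝ ∙ (z - y))ᗮ
  have hTz : T z = y := Submodule.reflection_sub h
  have hball : T ⁻¹' ball 0 a = ball 0 a := by
    ext x
    simp only [mem_preimage, mem_ball_zero_iff, LinearIsometryEquiv.norm_map]
  rw [← T.measurePreserving.setIntegral_preimage_emb T.toHomeomorph.measurableEmbedding, hball]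
  simp only [← hTz, ← map_sub, LinearIsometryEquiv.norm_map]

lemma integral_mul_inv_add_sq_sq {s : ℝ} (hs : 0 < s) (ρ : ℝ) :
    ∫ r in (0 : ℝ)..ρ, r * ((s + r ^ 2) ^ 2)⁻¹ = (s⁻¹ - (s + ρ ^ 2)⁻¹) / 2 := by
  have hderiv : ∀ r : ℝ,
      HasDerivAt (fun r => -(s + r ^ 2)⁻¹ / 2) (r * ((s + r ^ 2) ^ 2)⁻¹) r := by
    intro r
    have hsum : HasDerivAt (fun r : ℝ => s + r ^ 2) (2 * r) r := by
      simpa using (hasDerivAt_pow 2 r).const_add s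
    exact ((hsum.inv (by positivity)).neg.div_const 2).congr_deriv (by field_simp)
  rw [intervalIntegral.integral_eq_sub_of_hasDerivAt (fun r _ => hderiv r)
    (Continuous.intervalIntegrable (by fun_prop (disch := intro; positivity)) _ _)]
  ring

lemma setIntegral_ball_inv_add_norm_sq_sq {s : ℝ} (hs : 0 < s) {ρ : ℝ} (hρ : 0 ≤ ρ) :
    ∫ v in ball (0 : EuclideanSpace ℝ (Fin 2)) ρ, ((s + ‖v‖ ^ 2) ^ 2)⁻¹ =
      π * (s⁻¹ - (s + ρ ^ 2)⁻¹) := by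
  set g : ℝ → ℝ := (Iio ρ).indicator fun r => ((s + r ^ 2) ^ 2)⁻¹
  have hball : ∀ v : EuclideanSpace ℝ (Fin 2),
      (ball 0 ρ).indicator (fun v => ((s + ‖v‖ ^ 2) ^ 2)⁻¹) v = g ‖v‖ := by
    intro v
    simp only [g, indicator, mem_ball_zero_iff, mem_Iio]
  have hradial : ∀ r ∈ Ioi (0 : ℝ), r ^ (2 - 1) • g r =
      (Iio ρ).indicator (fun r => r * ((s + r ^ 2) ^ 2)⁻¹) r := by
    intro r _
    simp only [g, indicator, mem_Iio, smul_eq_mul]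
    split_ifs <;> ring
  rw [← integral_indicator measurableSet_ball, funext hball,
    integral_fun_norm_addHaar, finrank_euclideanSpace_fin,
    setIntegral_congr_fun measurableSet_Ioi hradial, setIntegral_indicator measurableSet_Iio,
    Ioi_inter_Iio, ← integral_Ioc_eq_integral_Ioo, ← intervalIntegral.integral_of_le hρ,
    integral_mul_inv_add_sq_sq hs, measureReal_def, EuclideanSpace.volume_ball_fin_two]
  simp [ENNReal.toReal_ofReal pi_nonneg]
  ring

lemma integral_inv_sq_sub_inv {a R : ℝ} (ha : 0 ≤ a) (hR : a < R) :
    ∫ t in (-a)..a, (((R - t) ^ 2)⁻¹ - (R ^ 2 - 2 * R * t + a ^ 2)⁻¹) =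
      (R - a)⁻¹ - (R + a)⁻¹ + log ((R - a) / (R + a)) / R := by
  have hR₀ : R ≠ 0 := by linarith
  have hpos : ∀ t ∈ uIcc (-a) a, 0 < R - t ∧ 0 < R ^ 2 - 2 * R * t + a ^ 2 := by
    intro t ht
    rw [uIcc_of_le (by linarith), mem_Icc] at ht
    constructor <;> nlinarith
  have hderiv : ∀ t ∈ uIcc (-a) a, HasDerivAt
      (fun t => (R - t)⁻¹ + log (R ^ 2 - 2 * R * t + a ^ 2) / (2 * R))
      (((R - t) ^ 2)⁻¹ - (R ^ 2 - 2 * R * t + a ^ 2)⁻¹) t := by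
    intro t ht
    obtain ⟨hlin_pos, hquad_pos⟩ := hpos t ht
    have hlin : HasDerivAt (fun t : ℝ => R - t) (-1) t := by
      simpa using (hasDerivAt_id t).const_sub R
    have hquad : HasDerivAt (fun t : ℝ => R ^ 2 - 2 * R * t + a ^ 2) (-(2 * R)) t := by
      simpa using (((hasDerivAt_id t).const_mul (2 * R)).const_sub (R ^ 2)).add_const (a ^ 2)
    refine ((hlin.inv hlin_pos.ne').add
      ((hquad.log hquad_pos.ne').div_const (2 * R))).congr_deriv ?_
    field_simp
    ring
  have hcont : ContinuousOn (fun t => ((R - t) ^ 2)⁻¹ - (R ^ 2 - 2 * R * t + a ^ 2)⁻¹)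
      (uIcc (-a) a) :=
    (((continuousOn_const.sub continuousOn_id).pow 2).inv₀ fun t ht =>
      pow_ne_zero 2 (hpos t ht).1.ne').sub <|
      (by fun_prop : Continuous _).continuousOn.inv₀ fun t ht => (hpos t ht).2.ne'
  rw [intervalIntegral.integral_eq_sub_of_hasDerivAt hderiv hcont.intervalIntegrable,
    log_div (by linarith) (by linarith),
    show R ^ 2 - 2 * R * a + a ^ 2 = (R - a) ^ 2 by ring,
    show R ^ 2 - 2 * R * -a + a ^ 2 = (R + a) ^ 2 by ring, log_pow, log_pow]
  field_simp
  ring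

lemma setIntegral_ball_inv_norm_toLp_cons_sub_pow_four {a R : ℝ} (ha : 0 ≤ a) (hR : a < R) :
    ∫ x in ball (0 : EuclideanSpace ℝ (Fin 3)) a,
        (‖WithLp.toLp 2 (Fin.cons R 0) - x‖ ^ 4)⁻¹ =
      π * ((R - a)⁻¹ - (R + a)⁻¹ + log ((R - a) / (R + a)) / R) := by
  set z : EuclideanSpace ℝ (Fin 3) := WithLp.toLp 2 (Fin.cons R 0)
  have hint : IntegrableOn (fun x => (‖z - x‖ ^ 4)⁻¹) (ball 0 a) := by
    refine (ContinuousOn.integrableOn_compact (isCompact_closedBall 0 a) ?_).mono_set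
      ball_subset_closedBall
    refine ContinuousOn.inv₀ (by fun_prop) fun x hx => pow_ne_zero 4 (norm_ne_zero_iff.2 ?_)
    rintro h
    rw [mem_closedBall_zero_iff, ← sub_eq_zero.1 h, norm_toLp_cons_zero] at hx
    linarith [le_abs_self R]
  have hslice : ∀ t ∈ Ioo (-a) a,
      ∫ v in ball (0 : EuclideanSpace ℝ (Fin 2)) √(a ^ 2 - t ^ 2),
        (‖z - WithLp.toLp 2 (Fin.cons t v)‖ ^ 4)⁻¹ =
      π * (((R - t) ^ 2)⁻¹ - (R ^ 2 - 2 * R * t + a ^ 2)⁻¹) := by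
    intro t ht
    have hnorm : ∀ v : EuclideanSpace ℝ (Fin 2),
        ‖z - WithLp.toLp 2 (Fin.cons t v)‖ ^ 4 = ((R - t) ^ 2 + ‖v‖ ^ 2) ^ 2 := by
      intro v
      rw [toLp_cons_sub_toLp_cons, show ∀ r : ℝ, r ^ 4 = (r ^ 2) ^ 2 by intro; ring,
        norm_toLp_cons_sq, WithLp.toLp_zero, zero_sub, norm_neg]
    simp only [hnorm]
    rw [setIntegral_ball_inv_add_norm_sq_sq (by nlinarith [ht.2]) (sqrt_nonneg _),
      sq_sqrt (by nlinarith [ht.1, ht.2]),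
      show (R - t) ^ 2 + (a ^ 2 - t ^ 2) = R ^ 2 - 2 * R * t + a ^ 2 by ring]
  rw [setIntegral_ball_eq_integral_Ioo_setIntegral_ball hint,
    setIntegral_congr_fun measurableSet_Ioo hslice, ← integral_Ioc_eq_integral_Ioo,
    ← intervalIntegral.integral_of_le (by linarith), intervalIntegral.integral_const_mul,
    integral_inv_sq_sub_inv ha hR]

theorem stmt0 (a : ℝ) (ha : 0 < a) (y : EuclideanSpace ℝ (Fin 3)) (hy : a < ‖y‖) :
    ∫ y' in Metric.ball (0 : EuclideanSpace ℝ (Fin 3)) a, 1 / ‖y - y'‖ ^ 4 =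
      (2 * π / (‖y‖ - a)) *
        (1 / (‖y‖ / a + 1) +
          ((‖y‖ / a - 1) / (2 * (‖y‖ / a))) * Real.log ((‖y‖ / a - 1) / (‖y‖ / a + 1))) := by
  set R := ‖y‖
  have hR : 0 < R := ha.trans hy
  have hRa : 0 < R - a := sub_pos.2 hy
  have hz : ‖(WithLp.toLp 2 (Fin.cons R 0) : EuclideanSpace ℝ (Fin 3))‖ = R := by
    rw [norm_toLp_cons_zero, abs_of_pos hR]
  rw [setIntegral_ball_comp_norm_sub_of_norm_eq (fun r => 1 / r ^ 4) a hz]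
  simp only [one_div]
  rw [setIntegral_ball_inv_norm_toLp_cons_sub_pow_four ha.le hy]
  have hratio : (R / a - 1) / (R / a + 1) = (R - a) / (R + a) := by
    field_simp
  rw [hratio]
  field_simp
  ring
end

section
/- The function t ↦ 1/(t+1) + ((t-1)/(2t))·log((t-1)/(t+1)) is positive and strictly decreasing on the interval (1, ∞). -/
/-!
Differentiating, `F' t = 1 / (t (t+1)²) + log q / (2 t²)` with `q = (t-1)/(t+1)`, and
`log q < q - 1 = -2/(t+1)` turns this into `F' t < -1 / (t² (t+1)²)`.
For positivity, `log q = -2 artanh (1/t)`, so `F t > 0` amounts to `artanh u < u / (1 - u²)` for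
`u = 1/t ∈ (0, 1)`, which follows from the Taylor bound `artanh u ≤ u + u³/3 + u⁵/(1 - u²)`.
-/

open Real

theorem Real.artanh_lt_div_one_sub_sq {x : ℝ} (hx₀ : 0 < x) (hx₁ : x < 1) :
    artanh x < x / (1 - x ^ 2) := by
  have hx2 : 0 < 1 - x ^ 2 := by nlinarith
  have h := log_div_le_sum_range_add hx₀.le hx₁ 2
  rw [← artanh_eq_half_log ⟨by linarith, hx₁.le⟩] at h
  norm_num [Finset.sum_range_succ] at h
  refine h.trans_lt ?_
  rw [lt_div_iff₀ hx2]
  field_simp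
  nlinarith [pow_pos hx₀ 3, pow_pos hx₀ 5]

noncomputable def F (t : ℝ) : ℝ :=
  1 / (t + 1) + ((t - 1) / (2 * t)) * log ((t - 1) / (t + 1))

theorem log_sub_one_div_add_one_eq_neg_two_mul_artanh_inv {t : ℝ} (ht : 1 < t) :
    log ((t - 1) / (t + 1)) = -2 * artanh t⁻¹ := by
  have hinv : (t - 1) / (t + 1) = ((1 + t⁻¹) / (1 - t⁻¹))⁻¹ := by
    have : t - 1 ≠ 0 := by linarith
    field_simp
  have ht' : t⁻¹ ∈ Set.Icc (-1) 1 :=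
    ⟨by linarith [inv_pos.2 (zero_lt_one.trans ht)], inv_le_one_of_one_le₀ ht.le⟩
  rw [artanh_eq_half_log ht', hinv, log_inv]
  ring

theorem F_pos {t : ℝ} (ht : 1 < t) : 0 < F t := by
  have ht0 : 0 < t := by linarith
  have h := artanh_lt_div_one_sub_sq (inv_pos.2 ht0) (inv_lt_one_of_one_lt₀ ht)
  rw [F, log_sub_one_div_add_one_eq_neg_two_mul_artanh_inv ht]
  generalize artanh t⁻¹ = a at h
  have : t - 1 ≠ 0 := by linarith
  field_simp at h ⊢
  rw [lt_div_iff₀ (by nlinarith)] at h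
  nlinarith

theorem hasDerivAt_F {t : ℝ} (ht : 1 < t) :
    HasDerivAt F (1 / (t * (t + 1) ^ 2) + log ((t - 1) / (t + 1)) / (2 * t ^ 2)) t := by
  have ht0 : t ≠ 0 := by linarith
  have ht1 : t - 1 ≠ 0 := by linarith
  have ht2 : t + 1 ≠ 0 := by linarith
  have hq := ((hasDerivAt_id t).sub_const 1).div ((hasDerivAt_id t).add_const 1) ht2
  have hc := ((hasDerivAt_id t).sub_const 1).div ((hasDerivAt_id t).const_mul 2)
    (by simpa using ht0)
  have h : HasDerivAt F _ t :=
    ((hasDerivAt_const t (1 : ℝ)).div ((hasDerivAt_id t).add_const 1) ht2).add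
      (hc.mul (hq.log (div_ne_zero ht1 ht2)))
  convert h using 1
  simp only [id, Pi.div_apply]
  field_simp
  ring

theorem deriv_F_neg {t : ℝ} (ht : 1 < t) : deriv F t < 0 := by
  have ht0 : 0 < t := by linarith
  have hq : 0 < (t - 1) / (t + 1) := div_pos (by linarith) (by linarith)
  have hlog : log ((t - 1) / (t + 1)) < -2 / (t + 1) := by
    have h := log_lt_sub_one_of_pos hq (by rw [ne_eq, div_eq_one_iff_eq (by linarith)]; linarith)
    convert h using 1
    field_simp; ring
  rw [(hasDerivAt_F ht).deriv]
  calc 1 / (t * (t + 1) ^ 2) + log ((t - 1) / (t + 1)) / (2 * t ^ 2)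
      < 1 / (t * (t + 1) ^ 2) + -2 / (t + 1) / (2 * t ^ 2) := by gcongr
    _ = -1 / (t ^ 2 * (t + 1) ^ 2) := by field_simp; ring
    _ < 0 := div_neg_of_neg_of_pos (by norm_num) (by positivity)

theorem strictAntiOn_F : StrictAntiOn F (Set.Ioi 1) := by
  refine strictAntiOn_of_deriv_neg (convex_Ioi 1)
    (fun t ht => (hasDerivAt_F ht).continuousAt.continuousWithinAt) ?_
  rw [interior_Ioi]
  exact fun t ht => deriv_F_neg ht

theorem stmt1 :
    (∀ t ∈ Set.Ioi (1 : ℝ),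
        0 < 1 / (t + 1) + ((t - 1) / (2 * t)) * Real.log ((t - 1) / (t + 1))) ∧
    StrictAntiOn
      (fun t : ℝ => 1 / (t + 1) + ((t - 1) / (2 * t)) * Real.log ((t - 1) / (t + 1)))
      (Set.Ioi 1) :=
  ⟨fun _ ht => F_pos ht, strictAntiOn_F⟩
end

section
/- For any y ∈ ℝ³ with |y| > a, the integral over the ball B_a of 1/|y - y'|^4 dy' is at most π/(|y| - a). -/
/-!
Rotate `y` to `‖y‖ e₀`. The ball then lies in the half-space `{x | x₀ < a}`, which is at
distance `d = ‖y‖ - a` from `y`, so it suffices to show that `|x|⁻⁴` integrates to `π / d`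
over a half-space at distance `d` from the origin. By Tonelli, slicing parallel to the boundary
plane, this is `∫_d^∞ π / t² dt`, the plane slice at height `t` being computed in polar
coordinates: `∫_{ℝ²} (t² + |p|²)⁻² dp = 2π ∫_0^∞ r (t² + r²)⁻² dr = π / t²`. Everything is done
for the lower Lebesgue integral, so no integrability needs to be checked.
-/

open MeasureTheory Real Set Filter Topology
open scoped ENNReal

lemma lintegral_Ioi_ofReal_of_hasDerivAt_of_nonneg {g g' : ℝ → ℝ} {a l : ℝ}
    (hderiv : ∀ x ∈ Ici a, HasDerivAt g (g' x) x) (hg' : ∀ x ∈ Ioi a, 0 ≤ g' x)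
    (hg : Tendsto g atTop (𝓝 l)) :
    ∫⁻ x in Ioi a, ENNReal.ofReal (g' x) = ENNReal.ofReal (l - g a) := by
  rw [← integral_Ioi_of_hasDerivAt_of_nonneg' hderiv hg' hg,
    ofReal_integral_eq_lintegral_ofReal (integrableOn_Ioi_deriv_of_nonneg' hderiv hg' hg)
      ((ae_restrict_iff' measurableSet_Ioi).2 (Eventually.of_forall hg'))]

lemma lintegral_Ioi_div_add_sq_sq {C : ℝ} (hC : 0 < C) :
    ∫⁻ r in Ioi 0, ENNReal.ofReal (r / (C + r ^ 2) ^ 2) = ENNReal.ofReal (1 / (2 * C)) := by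
  have hderiv : ∀ r ∈ Ici (0 : ℝ),
      HasDerivAt (fun r => -(2 * (C + r ^ 2))⁻¹) (r / (C + r ^ 2) ^ 2) r := fun r _ =>
    ((((hasDerivAt_pow 2 r).const_add C).const_mul 2).inv (by positivity)).neg.congr_deriv
      (by field_simp; ring)
  have hlim : Tendsto (fun r : ℝ => -(2 * (C + r ^ 2))⁻¹) atTop (𝓝 0) := by
    simpa using ((tendsto_atTop_add_const_left _ C
      (tendsto_pow_atTop two_ne_zero)).const_mul_atTop two_pos).inv_tendsto_atTop.neg
  rw [lintegral_Ioi_ofReal_of_hasDerivAt_of_nonneg hderiv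
    (fun r hr => div_nonneg (le_of_lt hr) (by positivity)) hlim]
  congr 1
  simp

lemma lintegral_Ioi_div_sq {k d : ℝ} (hk : 0 ≤ k) (hd : 0 < d) :
    ∫⁻ t in Ioi d, ENNReal.ofReal (k / t ^ 2) = ENNReal.ofReal (k / d) := by
  have hderiv : ∀ t ∈ Ici d, HasDerivAt (fun t => -k * t⁻¹) (k / t ^ 2) t := fun t ht =>
    ((hasDerivAt_inv (hd.trans_le ht).ne').const_mul (-k)).congr_deriv (by ring)
  have hlim : Tendsto (fun t : ℝ => -k * t⁻¹) atTop (𝓝 0) := by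
    simpa using tendsto_inv_atTop_zero.const_mul (-k)
  rw [lintegral_Ioi_ofReal_of_hasDerivAt_of_nonneg hderiv (fun t _ => by positivity) hlim]
  congr 1
  ring

lemma lintegral_one_div_add_sq_add_sq_sq {C : ℝ} (hC : 0 < C) :
    ∫⁻ p : ℝ × ℝ, ENNReal.ofReal (1 / (C + p.1 ^ 2 + p.2 ^ 2) ^ 2) = ENNReal.ofReal (π / C) := by
  have hpolar : ∀ p ∈ polarCoord.target, ENNReal.ofReal p.1 •
      ENNReal.ofReal (1 / (C + (polarCoord.symm p).1 ^ 2 + (polarCoord.symm p).2 ^ 2) ^ 2) =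
      ENNReal.ofReal (p.1 / (C + p.1 ^ 2) ^ 2) := by
    rintro ⟨r, θ⟩ ⟨hr, -⟩
    rw [smul_eq_mul, ← ENNReal.ofReal_mul (le_of_lt hr), polarCoord_symm_apply]
    congr 1
    have : (r * cos θ) ^ 2 + (r * sin θ) ^ 2 = r ^ 2 := by
      linear_combination r ^ 2 * sin_sq_add_cos_sq θ
    rw [add_assoc, this, mul_one_div]
  rw [← lintegral_comp_polarCoord_symm,
    setLIntegral_congr_fun polarCoord.open_target.measurableSet hpolar, polarCoord_target,
    Measure.volume_eq_prod, setLIntegral_prod _ (by fun_prop)]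
  simp only [setLIntegral_const, Real.volume_Ioo]
  rw [lintegral_mul_const _ (by fun_prop), lintegral_Ioi_div_add_sq_sq hC,
    ← ENNReal.ofReal_mul (by positivity)]
  congr 1
  field_simp
  ring

lemma lintegral_Ioi_prod_univ_one_div_sq_sq {d : ℝ} (hd : 0 < d) :
    ∫⁻ p in Ioi d ×ˢ (univ : Set (ℝ × ℝ)),
      ENNReal.ofReal (1 / (p.1 ^ 2 + p.2.1 ^ 2 + p.2.2 ^ 2) ^ 2) = ENNReal.ofReal (π / d) := by
  rw [Measure.volume_eq_prod, setLIntegral_prod _ (by fun_prop)]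
  simp only [Measure.restrict_univ]
  rw [setLIntegral_congr_fun measurableSet_Ioi
      (fun t ht => lintegral_one_div_add_sq_add_sq_sq (pow_pos (hd.trans ht) 2)),
    lintegral_Ioi_div_sq pi_pos.le hd]

def euclideanFinThreeEquivProd : EuclideanSpace ℝ (Fin 3) ≃ᵐ ℝ × ℝ × ℝ :=
  (MeasurableEquiv.toLp 2 (Fin 3 → ℝ)).symm.trans <|
    (MeasurableEquiv.piFinSuccAbove (fun _ => ℝ) 0).trans <|
      (MeasurableEquiv.refl ℝ).prodCongr <|
        (MeasurableEquiv.piFinSuccAbove (fun _ => ℝ) 0).trans <|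
          (MeasurableEquiv.refl ℝ).prodCongr (MeasurableEquiv.funUnique (Fin 1) ℝ)

lemma euclideanFinThreeEquivProd_apply (x : EuclideanSpace ℝ (Fin 3)) :
    euclideanFinThreeEquivProd x = (x 0, x 1, x 2) :=
  rfl

lemma measurePreserving_euclideanFinThreeEquivProd :
    MeasurePreserving euclideanFinThreeEquivProd :=
  (((MeasurePreserving.id _).prod
    (((MeasurePreserving.id _).prod (volume_preserving_funUnique (Fin 1) ℝ)).comp
      (volume_preserving_piFinSuccAbove (fun _ : Fin 2 => ℝ) 0))).comp
    (volume_preserving_piFinSuccAbove (fun _ : Fin 3 => ℝ) 0)).comp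
    (EuclideanSpace.volume_preserving_symm_measurableEquiv_toLp (Fin 3))

lemma lintegral_halfSpace_one_div_norm_pow_four {d : ℝ} (hd : 0 < d) :
    ∫⁻ x in {x : EuclideanSpace ℝ (Fin 3) | d < x 0}, ENNReal.ofReal (1 / ‖x‖ ^ 4) =
      ENNReal.ofReal (π / d) := by
  have hnorm (x : EuclideanSpace ℝ (Fin 3)) : ‖x‖ ^ 4 = (x 0 ^ 2 + x 1 ^ 2 + x 2 ^ 2) ^ 2 := by
    rw [show 4 = 2 * 2 from rfl, pow_mul, EuclideanSpace.norm_sq_eq, Fin.sum_univ_three]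
    simp only [Real.norm_eq_abs, sq_abs]
  have hset : {x : EuclideanSpace ℝ (Fin 3) | d < x 0} =
      euclideanFinThreeEquivProd ⁻¹' (Ioi d ×ˢ univ) := by
    ext x; simp [euclideanFinThreeEquivProd_apply]
  rw [hset, ← lintegral_Ioi_prod_univ_one_div_sq_sq hd,
    ← measurePreserving_euclideanFinThreeEquivProd.setLIntegral_comp_preimage_emb
      euclideanFinThreeEquivProd.measurableEmbedding]
  simp_rw [euclideanFinThreeEquivProd_apply, hnorm]

lemma lintegral_ball_norm_sub_eq_of_norm_eq {E : Type*} [NormedAddCommGroup E]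
    [InnerProductSpace ℝ E] [FiniteDimensional ℝ E] [MeasurableSpace E] [BorelSpace E]
    (f : ℝ → ℝ≥0∞) {y z : E} (h : ‖y‖ = ‖z‖) (a : ℝ) :
    ∫⁻ x in Metric.ball 0 a, f ‖y - x‖ = ∫⁻ x in Metric.ball 0 a, f ‖z - x‖ := by
  set T := (ℝ ∙ (y - z))ᗮ.reflection
  have hTy : T y = z := Submodule.reflection_sub h
  have hball : T ⁻¹' Metric.ball 0 a = Metric.ball 0 a := by ext x; simp
  rw [← T.measurePreserving.setLIntegral_comp_preimage_emb T.toHomeomorph.measurableEmbedding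
    (fun x => f ‖z - x‖), hball, ← hTy]
  simp_rw [← map_sub, LinearIsometryEquiv.norm_map]

theorem stmt2_general (a : ℝ) (y : EuclideanSpace ℝ (Fin 3)) (hy : a < ‖y‖) :
    ∫ y' in Metric.ball (0 : EuclideanSpace ℝ (Fin 3)) a, 1 / ‖y - y'‖ ^ 4 ≤
      π / (‖y‖ - a) := by
  set z : EuclideanSpace ℝ (Fin 3) := EuclideanSpace.single 0 ‖y‖
  have hball : Metric.ball 0 a ⊆ (z - ·) ⁻¹' {w | ‖y‖ - a < w 0} := by
    intro x hx
    have : x 0 < a := (le_abs_self _).trans_lt ((PiLp.norm_apply_le x 0).trans_lt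
      (mem_ball_zero_iff.1 hx))
    simpa [z] using this
  have hlint : ∫⁻ y' in Metric.ball 0 a, ENNReal.ofReal (1 / ‖y - y'‖ ^ 4) ≤
      ENNReal.ofReal (π / (‖y‖ - a)) := calc
    _ = ∫⁻ x in Metric.ball 0 a, ENNReal.ofReal (1 / ‖z - x‖ ^ 4) :=
      lintegral_ball_norm_sub_eq_of_norm_eq (fun r => ENNReal.ofReal (1 / r ^ 4)) (by simp [z]) a
    _ ≤ ∫⁻ x in (z - ·) ⁻¹' {w | ‖y‖ - a < w 0}, ENNReal.ofReal (1 / ‖z - x‖ ^ 4) :=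
      lintegral_mono_set hball
    _ = ∫⁻ w in {w : EuclideanSpace ℝ (Fin 3) | ‖y‖ - a < w 0}, ENNReal.ofReal (1 / ‖w‖ ^ 4) :=
      (Measure.measurePreserving_sub_left volume z).setLIntegral_comp_preimage_emb
        (Homeomorph.subLeft z).measurableEmbedding (fun w => ENNReal.ofReal (1 / ‖w‖ ^ 4)) _
    _ = ENNReal.ofReal (π / (‖y‖ - a)) :=
      lintegral_halfSpace_one_div_norm_pow_four (sub_pos.2 hy)
  rw [integral_eq_lintegral_of_nonneg_ae (Eventually.of_forall fun _ => by positivity)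
    (by fun_prop : Measurable fun y' => 1 / ‖y - y'‖ ^ 4).aestronglyMeasurable]
  exact ENNReal.toReal_le_of_le_ofReal (div_nonneg pi_pos.le (sub_pos.2 hy).le) hlint

theorem stmt2 (a : ℝ) (ha : 0 < a) (y : EuclideanSpace ℝ (Fin 3)) (hy : a < ‖y‖) :
    ∫ y' in Metric.ball (0 : EuclideanSpace ℝ (Fin 3)) a, 1 / ‖y - y'‖ ^ 4 ≤
      π / (‖y‖ - a) :=
  stmt2_general a y hy
end

section
/- For a > 0, the supremum over r > a of the integral over the exterior region {y' ∈ ℝ³ : |y'| > a} of 1/(r² + |y'|²)² dy' is attained at r = a and equals π(π+2)/(2a). -/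
open MeasureTheory Real Set Filter Topology Metric

/-!
In polar coordinates the integral is `4π ∫_a^∞ ρ² / (r² + ρ²)² dρ`, and
`(arctan (ρ / r) / r - ρ / (r² + ρ²)) / 2` is an antiderivative of the radial integrand, which
gives the closed form `π (π - 2 arctan (a / r)) / r + 2π a / (r² + a²)`. The integrand decreases
in `r`, so the value at `r = a` bounds the family, and it is approached as `r → a⁺` by continuity
of the closed form.
-/

theorem setIntegral_norm_gt_fun_norm {E F : Type*} [NormedAddCommGroup E] [NormedSpace ℝ E]
    [Nontrivial E] [MeasurableSpace E] [BorelSpace E] [FiniteDimensional ℝ E] [NormedAddCommGroup F]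
    [NormedSpace ℝ F] (μ : Measure E) [μ.IsAddHaarMeasure] {a : ℝ} (ha : 0 ≤ a) (f : ℝ → F) :
    ∫ x in {x : E | a < ‖x‖}, f ‖x‖ ∂μ =
      Module.finrank ℝ E • μ.real (ball 0 1) •
        ∫ y in Ioi a, y ^ (Module.finrank ℝ E - 1) • f y := by
  have hmeas : MeasurableSet {x : E | a < ‖x‖} := measurableSet_lt measurable_const measurable_norm
  rw [← integral_indicator hmeas]
  have : ({x : E | a < ‖x‖}.indicator fun x => f ‖x‖) = fun x => (Ioi a).indicator f ‖x‖ := by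
    ext x; by_cases h : a < ‖x‖ <;> simp [h]
  rw [this, integral_fun_norm_addHaar μ, ← indicator_smul,
    setIntegral_indicator measurableSet_Ioi, Ioi_inter_Ioi, max_eq_right ha]

theorem setIntegral_norm_gt_fun_norm_fin_three {F : Type*} [NormedAddCommGroup F]
    [NormedSpace ℝ F] {a : ℝ} (ha : 0 ≤ a) (f : ℝ → F) :
    ∫ x in {x : EuclideanSpace ℝ (Fin 3) | a < ‖x‖}, f ‖x‖ =
      (4 * π) • ∫ y in Ioi a, y ^ 2 • f y := by
  rw [setIntegral_norm_gt_fun_norm volume ha, finrank_euclideanSpace_fin, measureReal_def,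
    EuclideanSpace.volume_ball_fin_three, ← Nat.cast_smul_eq_nsmul ℝ, smul_smul]
  congr 1
  simp [ENNReal.toReal_ofReal (by positivity : (0 : ℝ) ≤ π * 4 / 3)]
  ring

section Radial

variable {r : ℝ}

theorem hasDerivAt_arctan_div_sub_div (hr : r ≠ 0) (x : ℝ) :
    HasDerivAt (fun ρ => (arctan (ρ / r) / r - ρ / (r ^ 2 + ρ ^ 2)) / 2)
      (x ^ 2 / (r ^ 2 + x ^ 2) ^ 2) x := by
  have hpos : 0 < r ^ 2 + x ^ 2 := by positivity
  have harctan := (((hasDerivAt_id x).div_const r).arctan).div_const r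
  have hquot := (hasDerivAt_id x).div ((hasDerivAt_pow 2 x).const_add (r ^ 2)) hpos.ne'
  refine ((harctan.sub hquot).div_const 2).congr_deriv ?_
  simp only [id]
  field_simp
  ring

theorem tendsto_arctan_div_sub_div_atTop (hr : 0 < r) :
    Tendsto (fun ρ => (arctan (ρ / r) / r - ρ / (r ^ 2 + ρ ^ 2)) / 2) atTop
      (𝓝 (π / (4 * r))) := by
  have harctan : Tendsto (fun ρ => arctan (ρ / r) / r) atTop (𝓝 (π / 2 / r)) :=
    ((tendsto_arctan_atTop.mono_right nhdsWithin_le_nhds).comp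
      (tendsto_id.atTop_div_const hr)).div_const r
  have hquot : Tendsto (fun ρ => ρ / (r ^ 2 + ρ ^ 2)) atTop (𝓝 0) := by
    refine squeeze_zero' ?_ ?_ tendsto_inv_atTop_zero
    · filter_upwards [eventually_ge_atTop 0] with ρ hρ
      positivity
    · filter_upwards [eventually_gt_atTop 0] with ρ hρ
      rw [div_le_iff₀ (by positivity), inv_mul_eq_div, le_div_iff₀ hρ]
      nlinarith
  convert (harctan.sub hquot).div_const 2 using 2
  ring

variable (a : ℝ)

theorem integrableOn_Ioi_sq_div_sq_add_sq_sq (hr : 0 < r) :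
    IntegrableOn (fun ρ => ρ ^ 2 / (r ^ 2 + ρ ^ 2) ^ 2) (Ioi a) :=
  integrableOn_Ioi_deriv_of_nonneg
    (hasDerivAt_arctan_div_sub_div hr.ne' a).continuousAt.continuousWithinAt
    (fun x _ => hasDerivAt_arctan_div_sub_div hr.ne' x) (fun x _ => by positivity)
    (tendsto_arctan_div_sub_div_atTop hr)

theorem integral_Ioi_sq_div_sq_add_sq_sq (hr : 0 < r) :
    ∫ ρ in Ioi a, ρ ^ 2 / (r ^ 2 + ρ ^ 2) ^ 2 =
      π / (4 * r) - (arctan (a / r) / r - a / (r ^ 2 + a ^ 2)) / 2 :=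
  integral_Ioi_of_hasDerivAt_of_tendsto'
    (fun x _ => hasDerivAt_arctan_div_sub_div hr.ne' x)
    (integrableOn_Ioi_sq_div_sq_add_sq_sq a hr) (tendsto_arctan_div_sub_div_atTop hr)

end Radial

theorem setIntegral_norm_gt_one_div_sq_add_norm_sq_sq {a : ℝ} (ha : 0 ≤ a) (r : ℝ) :
    ∫ y in {y : EuclideanSpace ℝ (Fin 3) | a < ‖y‖}, 1 / (r ^ 2 + ‖y‖ ^ 2) ^ 2 =
      4 * π * ∫ ρ in Ioi a, ρ ^ 2 / (r ^ 2 + ρ ^ 2) ^ 2 := by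
  rw [setIntegral_norm_gt_fun_norm_fin_three ha fun ρ => 1 / (r ^ 2 + ρ ^ 2) ^ 2]
  simp only [smul_eq_mul, mul_one_div]

theorem antitoneOn_integral_Ioi_sq_div_sq_add_sq_sq (a : ℝ) :
    AntitoneOn (fun r => ∫ ρ in Ioi a, ρ ^ 2 / (r ^ 2 + ρ ^ 2) ^ 2) (Ioi 0) := by
  intro r (hr : 0 < r) s _ hrs
  refine setIntegral_mono_on (integrableOn_Ioi_sq_div_sq_add_sq_sq a (hr.trans_le hrs))
    (integrableOn_Ioi_sq_div_sq_add_sq_sq a hr) measurableSet_Ioi fun ρ _ => ?_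
  gcongr

theorem stmt3 (a : ℝ) (ha : 0 < a) :
    IsLUB
      ((fun r : ℝ =>
          ∫ y' in {y' : EuclideanSpace ℝ (Fin 3) | a < ‖y'‖}, 1 / (r ^ 2 + ‖y'‖ ^ 2) ^ 2) ''
        Set.Ioi a)
      (∫ y' in {y' : EuclideanSpace ℝ (Fin 3) | a < ‖y'‖}, 1 / (a ^ 2 + ‖y'‖ ^ 2) ^ 2) ∧
    (∫ y' in {y' : EuclideanSpace ℝ (Fin 3) | a < ‖y'‖}, 1 / (a ^ 2 + ‖y'‖ ^ 2) ^ 2) =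
      π * (π + 2) / (2 * a) := by
  have closed_form : ∀ r, 0 < r →
      ∫ y in {y : EuclideanSpace ℝ (Fin 3) | a < ‖y‖}, 1 / (r ^ 2 + ‖y‖ ^ 2) ^ 2 =
        π * (π - 2 * arctan (a / r)) / r + 2 * π * a / (r ^ 2 + a ^ 2) := by
    intro r hr
    rw [setIntegral_norm_gt_one_div_sq_add_norm_sq_sq ha.le, integral_Ioi_sq_div_sq_add_sq_sq a hr]
    ring
  have hcont : ContinuousAt (fun r : ℝ =>
      ∫ y in {y : EuclideanSpace ℝ (Fin 3) | a < ‖y‖}, 1 / (r ^ 2 + ‖y‖ ^ 2) ^ 2) a := by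
    refine ContinuousAt.congr ?_ (eventually_gt_nhds ha |>.mono fun r hr => (closed_form r hr).symm)
    fun_prop (disch := positivity)
  refine ⟨isLUB_of_mem_closure ?_ ?_, ?_⟩
  · rintro _ ⟨r, hr, rfl⟩
    simp only [setIntegral_norm_gt_one_div_sq_add_norm_sq_sq ha.le]
    exact mul_le_mul_of_nonneg_left
      (antitoneOn_integral_Ioi_sq_div_sq_add_sq_sq a ha (ha.trans hr) hr.le) (by positivity)
  · exact hcont.continuousWithinAt.mem_closure_image (by simp)
  · rw [closed_form a ha, div_self ha.ne', arctan_one]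
    field_simp
    ring
end

section
/- The L¹(ℝ³) norm of the function H^λ(y) = |y|^{-4}·[1 - (1/2) t² K₂(t)] with t = √λ·|y| equals π²√λ, for every λ > 0. -/
/-!
Polar coordinates turn the integral into `4π ∫₀^∞ h(√λ r) / r² dr = 4π√λ ∫₀^∞ h(t) / t² dt` with
`h(t) = 1 - t² K₂(t) / 2`. Since `(t² K₂)' = -t² K₁` and `t² K₂ → 2` at `0⁺`, we have
`h(t) = ½ ∫₀ᵗ s² K₁(s) ds`, and exchanging the order of integration
(`∫ₛ^∞ dt / t² = 1 / s`) gives `∫₀^∞ h(t) / t² dt = ½ ∫₀^∞ s K₁(s) ds = π / 4`.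
-/

open MeasureTheory Real Filter Set Topology

lemma inv_sq_eq_rpow {t : ℝ} (ht : 0 ≤ t) : (t ^ 2)⁻¹ = t ^ (-2 : ℝ) := by
  rw [rpow_neg ht, rpow_two]

lemma integrableOn_Ioi_inv_sq {c : ℝ} (hc : 0 < c) :
    IntegrableOn (fun t : ℝ => (t ^ 2)⁻¹) (Ioi c) :=
  (integrableOn_Ioi_rpow_of_lt (by norm_num) hc).congr_fun
    (fun t ht => (inv_sq_eq_rpow (hc.trans ht).le).symm) measurableSet_Ioi

lemma integral_Ioi_inv_sq {c : ℝ} (hc : 0 < c) : ∫ t in Ioi c, (t ^ 2)⁻¹ = c⁻¹ := by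
  rw [setIntegral_congr_fun measurableSet_Ioi fun t ht => inv_sq_eq_rpow (hc.trans ht).le,
    integral_Ioi_rpow_of_lt (by norm_num) hc]
  norm_num [rpow_neg_one]

lemma indicator_Ici_eq_indicator_Iic (f : ℝ → ℝ → ℝ) (s t : ℝ) :
    (Ici s).indicator (f s) t = (Iic t).indicator (fun s => f s t) s := by
  simp only [indicator_apply, mem_Ici, mem_Iic]

lemma setIntegral_Ioi_zero_indicator_Ici {f : ℝ → ℝ} {s : ℝ} (hs : 0 < s) :
    ∫ t in Ioi 0, (Ici s).indicator f t = ∫ t in Ioi s, f t := by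
  rw [integral_indicator measurableSet_Ici, Measure.restrict_restrict measurableSet_Ici,
    inter_eq_left.2 (Ici_subset_Ioi.2 hs), integral_Ici_eq_integral_Ioi]

lemma integral_Ioi_indicator_Ici_div_sq {s : ℝ} (hs : 0 < s) :
    ∫ t in Ioi 0, (Ici s).indicator (fun t => s / t ^ 2) t = 1 := by
  simp_rw [setIntegral_Ioi_zero_indicator_Ici hs, div_eq_mul_inv, integral_const_mul,
    integral_Ioi_inv_sq hs, mul_inv_cancel₀ hs.ne']

lemma integrableOn_Ioi_indicator_Ici_div_sq {s : ℝ} (hs : 0 < s) :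
    IntegrableOn (fun t => (Ici s).indicator (fun t => s / t ^ 2) t) (Ioi 0) := by
  refine (IntegrableOn.integrable_indicator ?_ measurableSet_Ici).integrableOn
  rw [integrableOn_Ici_iff_integrableOn_Ioi]
  simp_rw [div_eq_mul_inv]
  exact (integrableOn_Ioi_inv_sq hs).const_mul s

/-- Fubini against the kernel `k s t = 𝟙{s ≤ t} s / t²`, which has unit mass in `t` for every
`s > 0`. -/
lemma integral_Ioi_setIntegral_Ioc_mul_div_sq {g : ℝ → ℝ} (hg : IntegrableOn g (Ioi 0)) :
    ∫ t in Ioi 0, (∫ s in Ioc 0 t, s * g s) / t ^ 2 = ∫ s in Ioi 0, g s := by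
  set μ := volume.restrict (Ioi (0 : ℝ))
  set k : ℝ → ℝ → ℝ := fun s t => (Ici s).indicator (fun t => s / t ^ 2) t with hk
  have hk_nonneg : ∀ᵐ s ∂μ, ∀ t, 0 ≤ k s t := by
    filter_upwards [ae_restrict_mem measurableSet_Ioi] with s hs t
    exact indicator_nonneg (fun t _ => div_nonneg hs.le (sq_nonneg t)) t
  have hk_mass : ∀ s, 0 < s → ∫ t, k s t ∂μ = 1 := fun s hs =>
    integral_Ioi_indicator_Ici_div_sq hs
  have hmeas : AEStronglyMeasurable (Function.uncurry fun s t => g s * k s t) (μ.prod μ) := by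
    refine hg.aestronglyMeasurable.comp_fst.mul (Measurable.aestronglyMeasurable ?_)
    simp only [hk, indicator_apply, mem_Ici]
    exact Measurable.ite (measurableSet_le measurable_fst measurable_snd)
      (measurable_fst.div (measurable_snd.pow_const 2)) measurable_const
  have hint : Integrable (Function.uncurry fun s t => g s * k s t) (μ.prod μ) := by
    refine (integrable_prod_iff hmeas).2 ⟨?_, hg.norm.congr ?_⟩
    · filter_upwards [ae_restrict_mem measurableSet_Ioi] with s hs
      exact (integrableOn_Ioi_indicator_Ici_div_sq hs).const_mul (g s)
    · filter_upwards [ae_restrict_mem measurableSet_Ioi, hk_nonneg] with s hs hks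
      simp only [Function.uncurry_apply_pair, norm_mul, Real.norm_of_nonneg (hks _),
        integral_const_mul, hk_mass s hs, mul_one]
  have hinner_t : ∀ᵐ s ∂μ, ∫ t, g s * k s t ∂μ = g s := by
    filter_upwards [ae_restrict_mem measurableSet_Ioi] with s hs
    rw [integral_const_mul, hk_mass s hs, mul_one]
  have hinner_s : ∀ t, ∫ s, g s * k s t ∂μ = (∫ s in Ioc 0 t, s * g s) / t ^ 2 := by
    intro t
    simp_rw [hk, indicator_Ici_eq_indicator_Iic (fun s t => s / t ^ 2), ← indicator_mul_right,
      integral_indicator measurableSet_Iic, μ, Measure.restrict_restrict measurableSet_Iic,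
      Iic_inter_Ioi, ← integral_div]
    exact integral_congr_ae (Eventually.of_forall fun s => by ring)
  rw [← integral_congr_ae hinner_t, integral_integral_swap hint]
  simp_rw [hinner_s]

lemma IntegrableOn.mul_id_Ioc {g : ℝ → ℝ} {a b : ℝ} (hg : IntegrableOn g (Ioc a b)) :
    IntegrableOn (fun s => s * g s) (Ioc a b) := by
  rw [← integrableOn_Icc_iff_integrableOn_Ioc] at hg ⊢
  exact hg.continuousOn_mul continuousOn_id isCompact_Icc

lemma setIntegral_Ioc_eq_sub_of_hasDerivAt_of_tendsto {F f : ℝ → ℝ} {a b L : ℝ} (hab : a < b)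
    (hderiv : ∀ x ∈ Ioc a b, HasDerivAt F (f x) x) (hf : IntegrableOn f (Ioc a b))
    (ha : Tendsto F (𝓝[>] a) (𝓝 L)) :
    ∫ x in Ioc a b, f x = F b - L := by
  rw [← intervalIntegral.integral_of_le hab.le]
  exact intervalIntegral.integral_eq_sub_of_hasDerivAt_of_tendsto hab
    (fun x hx => hderiv x (Ioo_subset_Ioc_self hx))
    ((intervalIntegrable_iff_integrableOn_Ioc_of_le hab.le).2 hf) ha
    ((hderiv b (right_mem_Ioc.2 hab)).continuousAt.tendsto.mono_left nhdsWithin_le_nhds)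

lemma integral_Ioi_comp_mul_div_sq (h : ℝ → ℝ) {c : ℝ} (hc : 0 < c) :
    ∫ r in Ioi 0, h (c * r) / r ^ 2 = c * ∫ u in Ioi 0, h u / u ^ 2 := by
  have hscale : ∀ r, h (c * r) / r ^ 2 = c ^ 2 * (h (c * r) / (c * r) ^ 2) := by
    intro r
    rcases eq_or_ne r 0 with rfl | hr
    · simp
    · field_simp
  simp_rw [hscale, integral_const_mul, integral_comp_mul_left_Ioi (fun u => h u / u ^ 2) 0 hc,
    mul_zero, smul_eq_mul]
  field_simp

lemma integral_fun_norm_euclideanSpace_fin_three (f : ℝ → ℝ) :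
    ∫ y : EuclideanSpace ℝ (Fin 3), f ‖y‖ = 4 * π * ∫ r in Ioi 0, r ^ 2 * f r := by
  rw [integral_fun_norm_addHaar, finrank_euclideanSpace_fin, measureReal_def,
    EuclideanSpace.volume_ball_fin_three, ENNReal.ofReal_one, one_pow, one_mul,
    ENNReal.toReal_ofReal (by positivity)]
  simp only [nsmul_eq_mul, smul_eq_mul, Nat.add_one_sub_one]
  ring

theorem stmt10 (K1 K2 : ℝ → ℝ)
    (hderiv : ∀ t : ℝ, 0 < t →
      HasDerivAt (fun s : ℝ => s ^ 2 * K2 s) (-(t ^ 2 * K1 t)) t)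
    (hint : ∫ t in Set.Ioi (0 : ℝ), t * K1 t = π / 2)
    (hlim0 : Tendsto (fun t : ℝ => t ^ 2 * K2 t) (nhdsWithin 0 (Set.Ioi 0)) (nhds 2))
    (lam : ℝ) (hlam : 0 < lam) :
    ∫ y : EuclideanSpace ℝ (Fin 3),
      (1 - 1 / 2 * (Real.sqrt lam * ‖y‖) ^ 2 * K2 (Real.sqrt lam * ‖y‖)) / ‖y‖ ^ 4 =
      π ^ 2 * Real.sqrt lam := by
  set h : ℝ → ℝ := fun t => 1 - 1 / 2 * t ^ 2 * K2 t
  have hK1 : IntegrableOn (fun t => t * K1 t) (Ioi 0) := by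
    by_contra hK1
    rw [integral_undef hK1] at hint
    linarith [pi_pos]
  have hh : ∀ t, 0 < t → h t = (∫ s in Ioc 0 t, s * (s * K1 s)) / 2 := by
    intro t ht
    have hFTC := setIntegral_Ioc_eq_sub_of_hasDerivAt_of_tendsto
      (f := fun s => -(s * (s * K1 s))) ht (fun x hx => by convert hderiv x hx.1 using 1; ring)
      (IntegrableOn.mul_id_Ioc (hK1.mono_set Ioc_subset_Ioi_self)).neg hlim0
    rw [integral_neg] at hFTC
    linear_combination hFTC / 2
  have hradial : ∫ r in Ioi 0, r ^ 2 * (h (√lam * r) / r ^ 4) =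
      ∫ r in Ioi 0, h (√lam * r) / r ^ 2 :=
    setIntegral_congr_fun measurableSet_Ioi fun r (hr : 0 < r) => by field_simp
  calc ∫ y : EuclideanSpace ℝ (Fin 3), h (√lam * ‖y‖) / ‖y‖ ^ 4
      = 4 * π * (√lam * ∫ u in Ioi 0, h u / u ^ 2) := by
        rw [integral_fun_norm_euclideanSpace_fin_three (fun r => h (√lam * r) / r ^ 4), hradial,
          integral_Ioi_comp_mul_div_sq h (sqrt_pos.2 hlam)]
    _ = 4 * π * (√lam * ((∫ t in Ioi 0, t * K1 t) / 2)) := by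
        rw [setIntegral_congr_fun measurableSet_Ioi fun u (hu : 0 < u) => by
            rw [hh u hu, div_div, mul_comm 2, ← div_div],
          integral_div, integral_Ioi_setIntegral_Ioc_mul_div_sq hK1]
    _ = π ^ 2 * √lam := by rw [hint]; ring
end

section
/- The function z ↦ (1/z)·(1 - sinh(s₀ arctan(1/z))/sinh(s₀π/2)) defined for z > 0 attains its supremum as the limit z → 0⁺, which equals s₀·cosh(s₀π/2)/sinh(s₀π/2). -/
/-!
Since `arctan (1 / z) = π / 2 - arctan z` for `z > 0`, the function is the difference quotient
`(1 - ψ z) / z` of `ψ z = sinh (s₀ (π / 2 - arctan z)) / sinh (s₀ π / 2)` at `0`, where `ψ 0 = 1`;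
so its limit at `0⁺` is `-ψ' 0 = s₀ cosh (s₀ π / 2) / sinh (s₀ π / 2)`. The same value bounds it
from above: `sinh` is `cosh b`-Lipschitz on `[-b, b]` and `arctan z ≤ z`.
-/

open Real Filter Topology

namespace Real

theorem arctan_le_self {x : ℝ} (hx : 0 ≤ x) : arctan x ≤ x := by
  simpa only [tan_arctan] using le_tan (arctan_nonneg.mpr hx) (arctan_lt_pi_div_two x)

theorem sinh_sub_sinh_le_cosh_mul {a b : ℝ} (hba : -b ≤ a) (hab : a ≤ b) :
    sinh b - sinh a ≤ cosh b * (b - a) := by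
  refine (convex_Icc (-b) b).image_sub_le_mul_sub_of_deriv_le continuous_sinh.continuousOn
    differentiable_sinh.differentiableOn (fun x hx => ?_) a ⟨hba, hab⟩ b
    ⟨by linarith, le_rfl⟩ hab
  rw [interior_Icc] at hx
  rw [deriv_sinh, cosh_le_cosh]
  exact (abs_le.mpr ⟨hx.1.le, hx.2.le⟩).trans (le_abs_self b)

theorem hasDerivAt_sinh_mul_sub_arctan (s c x : ℝ) :
    HasDerivAt (fun z => sinh (s * (c - arctan z)))
      (-(s * cosh (s * (c - arctan x)) / (1 + x ^ 2))) x :=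
  (((hasDerivAt_arctan x).const_sub c).const_mul s).sinh.congr_deriv (by ring)

theorem sinh_mul_pi_div_two_sub_le {s z : ℝ} (hs : 0 ≤ s) (hz : 0 ≤ z) :
    sinh (s * π / 2) - sinh (s * (π / 2 - arctan z)) ≤ s * cosh (s * π / 2) * z := by
  have h0 : 0 ≤ arctan z := arctan_nonneg.mpr hz
  have h1 : arctan z < π / 2 := arctan_lt_pi_div_two z
  calc sinh (s * π / 2) - sinh (s * (π / 2 - arctan z))
      ≤ cosh (s * π / 2) * (s * π / 2 - s * (π / 2 - arctan z)) :=
        sinh_sub_sinh_le_cosh_mul (by nlinarith [pi_pos]) (by nlinarith)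
    _ = s * cosh (s * π / 2) * arctan z := by ring
    _ ≤ s * cosh (s * π / 2) * z := by gcongr; exact arctan_le_self hz

end Real

theorem tendsto_one_div_mul_one_sub_of_hasDerivAt {φ : ℝ → ℝ} {φ' : ℝ} (hφ : HasDerivAt φ φ' 0)
    (hφ0 : φ 0 = 1) : Tendsto (fun z => 1 / z * (1 - φ z)) (𝓝[≠] 0) (𝓝 (-φ')) := by
  convert (hasDerivAt_iff_tendsto_slope.mp hφ).neg using 1
  ext z
  rw [slope_def_field, hφ0]
  ring

theorem stmt14 (s₀ : ℝ) (hs₀ : 0 < s₀) :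
    Tendsto
      (fun z : ℝ =>
        (1 / z) * (1 - Real.sinh (s₀ * Real.arctan (1 / z)) / Real.sinh (s₀ * π / 2)))
      (nhdsWithin 0 (Set.Ioi 0))
      (nhds (s₀ * Real.cosh (s₀ * π / 2) / Real.sinh (s₀ * π / 2))) ∧
    IsLUB
      ((fun z : ℝ =>
          (1 / z) * (1 - Real.sinh (s₀ * Real.arctan (1 / z)) / Real.sinh (s₀ * π / 2))) ''
        Set.Ioi 0)
      (s₀ * Real.cosh (s₀ * π / 2) / Real.sinh (s₀ * π / 2)) := by
  set S := sinh (s₀ * π / 2)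
  have hS : 0 < S := sinh_pos_iff.mpr (by positivity)
  set ψ : ℝ → ℝ := fun z => sinh (s₀ * (π / 2 - arctan z)) / S
  have hψ0 : ψ 0 = 1 := by
    simp only [ψ, arctan_zero, sub_zero, ← mul_div_assoc]
    exact div_self hS.ne'
  have hψ : HasDerivAt ψ (-(s₀ * cosh (s₀ * π / 2) / S)) 0 :=
    ((hasDerivAt_sinh_mul_sub_arctan s₀ (π / 2) 0).div_const S).congr_deriv <| by
      simp only [arctan_zero, sub_zero, ← mul_div_assoc]
      ring
  have hf : ∀ z ∈ Set.Ioi (0 : ℝ),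
      1 / z * (1 - ψ z) = 1 / z * (1 - sinh (s₀ * arctan (1 / z)) / S) := by
    intro z hz
    rw [one_div z, arctan_inv_of_pos hz]
  have hlim : Tendsto (fun z => 1 / z * (1 - sinh (s₀ * arctan (1 / z)) / S)) (𝓝[>] 0)
      (𝓝 (s₀ * cosh (s₀ * π / 2) / S)) := by
    have h := (tendsto_one_div_mul_one_sub_of_hasDerivAt hψ hψ0).mono_left (nhdsGT_le_nhdsNE 0)
    rw [neg_neg] at h
    exact h.congr' (eventually_nhdsWithin_of_forall hf)
  refine ⟨hlim, ?_, fun b hb => le_of_tendsto hlim ?_⟩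
  · rintro _ ⟨z, hz, rfl⟩
    dsimp only
    rw [← hf z hz, one_sub_div hS.ne', ← mul_div_assoc, div_le_div_iff_of_pos_right hS,
      one_div_mul_eq_div, div_le_iff₀ hz]
    exact sinh_mul_pi_div_two_sub_le hs₀.le hz.le
  · exact eventually_nhdsWithin_of_forall fun z hz => hb ⟨z, hz, rfl⟩
end

section
/- The equation -s·cosh(πs/2) + (8/√3)·sinh(πs/6) = 0 has a unique positive solution s₀, and s₀ ∈ (1, 1.01). -/
/-! Since `sinh (3x) ≥ 3 sinh x`, the term `-π sinh (πs/2)` of `φ''` absorbs the convex contribution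
`(8/√3) (π/6)² sinh (πs/6)`, so `φ` is strictly concave on `[0, ∞)`. As `φ 0 = 0`, a positive zero
`z` of `φ` satisfies `φ > 0` on `(0, z)` and `φ < 0` beyond `z`; hence there is at most one, and
`φ 1 > 0 > φ 1.01` locates it in `(1, 1.01)` and gives its existence by the intermediate value
theorem. With `u = exp (πs/3)` one has `2 exp (πs/2) φ s = (8/√3)(u² - u) - s (u³ + 1)`, so the two
signs are cubic inequalities in `u`, checked from Taylor bounds on `exp (πs/6)`. -/

open Real Set

theorem StrictConcaveOn.le_of_map_nonpos_of_map_nonneg {f : ℝ → ℝ} {a y z : ℝ}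
    (hf : StrictConcaveOn ℝ (Ici a) f) (hfa : 0 ≤ f a) (hay : a < y) (hfy : f y ≤ 0)
    (hfz : 0 ≤ f z) : z ≤ y := by
  by_contra! hyz
  have hy : y ∈ openSegment ℝ a z := by rw [openSegment_eq_Ioo (hay.trans hyz)]; exact ⟨hay, hyz⟩
  have := hf.lt_on_openSegment self_mem_Ici (mem_Ici.2 (hay.trans hyz).le) (hay.trans hyz).ne hy
  exact hfy.not_gt ((le_min hfa hfz).trans_lt this)

noncomputable def φ (s : ℝ) : ℝ := -s * cosh (π * s / 2) + (8 / √3) * sinh (π * s / 6)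

lemma hasDerivAt_phi (s : ℝ) :
    HasDerivAt φ (-cosh (π * s / 2) - π / 2 * s * sinh (π * s / 2) +
      8 / √3 * (π / 6) * cosh (π * s / 6)) s := by
  have h2 : HasDerivAt (fun s : ℝ => π * s / 2) (π / 2) s := by
    simpa using ((hasDerivAt_id s).const_mul π).div_const 2
  have h6 : HasDerivAt (fun s : ℝ => π * s / 6) (π / 6) s := by
    simpa using ((hasDerivAt_id s).const_mul π).div_const 6
  exact (((hasDerivAt_neg s).mul h2.cosh).add (h6.sinh.const_mul (8 / √3))).congr_deriv (by ring)

lemma hasDerivAt_deriv_phi (s : ℝ) :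
    HasDerivAt (deriv φ) (-π * sinh (π * s / 2) - (π / 2) ^ 2 * s * cosh (π * s / 2) +
      8 / √3 * (π / 6) ^ 2 * sinh (π * s / 6)) s := by
  have h2 : HasDerivAt (fun s : ℝ => π * s / 2) (π / 2) s := by
    simpa using ((hasDerivAt_id s).const_mul π).div_const 2
  have h6 : HasDerivAt (fun s : ℝ => π * s / 6) (π / 6) s := by
    simpa using ((hasDerivAt_id s).const_mul π).div_const 6
  rw [show deriv φ = _ from funext fun s => (hasDerivAt_phi s).deriv]
  exact ((h2.cosh.neg.sub (((hasDerivAt_id' s).const_mul (π / 2)).mul h2.sinh)).add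
    (h6.cosh.const_mul (8 / √3 * (π / 6)))).congr_deriv (by ring)

lemma sqrt_three_mem_Ioo : √3 ∈ Ioo 1.732 1.7321 := by
  constructor
  · rw [lt_sqrt (by norm_num)]; norm_num
  · rw [sqrt_lt' (by norm_num)]; norm_num

lemma deriv2_phi_neg {s : ℝ} (hs : 0 < s) : deriv^[2] φ s < 0 := by
  rw [Function.iterate_succ_apply, Function.iterate_one, (hasDerivAt_deriv_phi s).deriv]
  have hS : 0 < sinh (π * s / 6) := sinh_pos_iff.2 (by positivity)
  have h3 : 3 * sinh (π * s / 6) ≤ sinh (π * s / 2) := by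
    rw [show π * s / 2 = 3 * (π * s / 6) by ring, sinh_three_mul]
    nlinarith [pow_pos hS 3]
  have hc : 8 / √3 * (π / 6) ^ 2 < 3 * π := by
    rw [div_mul_eq_mul_div, div_lt_iff₀ (sqrt_pos.2 (by norm_num))]
    nlinarith [sqrt_three_mem_Ioo.1, pi_gt_three, pi_lt_four]
  nlinarith [mul_pos (mul_pos (pow_pos pi_pos 2) hs) (cosh_pos (π * s / 2)), pi_pos]

lemma strictConcaveOn_phi : StrictConcaveOn ℝ (Ici 0) φ := by
  refine strictConcaveOn_of_deriv2_neg (convex_Ici 0) (by unfold φ; fun_prop) fun s hs => ?_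
  rw [interior_Ici] at hs
  exact deriv2_phi_neg hs

lemma two_mul_exp_mul_phi (s : ℝ) :
    2 * exp (π * s / 2) * φ s =
      8 / √3 * (exp (π * s / 3) ^ 2 - exp (π * s / 3)) - s * (exp (π * s / 3) ^ 3 + 1) := by
  have hpow (n : ℕ) : exp (π * s / 6) ^ n = exp (n * (π * s / 6)) := (exp_nat_mul _ n).symm
  have h2 : exp (π * s / 3) = exp (π * s / 6) ^ 2 := by rw [hpow]; push_cast; ring_nf
  have h3 : exp (π * s / 2) = exp (π * s / 6) ^ 3 := by rw [hpow]; push_cast; ring_nf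
  simp only [φ, cosh_eq, sinh_eq, exp_neg, h2, h3]
  field_simp
  ring

lemma exp_pi_mul_div_six_mem_Icc {s : ℝ} (hs : s ∈ Icc 1 1.01) :
    exp (π * s / 6) ∈ Icc 1.6868 1.6982 := by
  have hπ := pi_gt_d6
  have hπ' := pi_lt_d6
  constructor
  · calc (1.6868 : ℝ) ≤ ∑ i ∈ Finset.range 6, (0.5235 : ℝ) ^ i / i.factorial := by
          norm_num [Finset.sum_range_succ, Nat.factorial]
      _ ≤ exp 0.5235 := sum_le_exp_of_nonneg (by norm_num) 6
      _ ≤ exp (π * s / 6) := exp_le_exp.2 (by nlinarith [hs.1])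
  · calc exp (π * s / 6) ≤ exp 0.529 := exp_le_exp.2 (by nlinarith [hs.2])
      _ ≤ _ := exp_bound' (by norm_num) (by norm_num) (n := 5) (by norm_num)
      _ ≤ 1.6982 := by norm_num [Finset.sum_range_succ, Nat.factorial]

lemma exp_pi_mul_div_three_mem_Icc {s : ℝ} (hs : s ∈ Icc 1 1.01) :
    exp (π * s / 3) ∈ Icc 2.845 2.884 := by
  obtain ⟨hlo, hhi⟩ := exp_pi_mul_div_six_mem_Icc hs
  rw [show π * s / 3 = π * s / 6 + π * s / 6 by ring, exp_add]
  constructor <;> nlinarith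

lemma eight_div_sqrt_three_mem_Ioo : 8 / √3 ∈ Ioo 4.618 4.619 := by
  obtain ⟨hlo, hhi⟩ := sqrt_three_mem_Ioo
  have h3 : 0 < √3 := by linarith
  constructor
  · rw [lt_div_iff₀ h3]; linarith
  · rw [div_lt_iff₀ h3]; linarith

lemma phi_one_pos : 0 < φ 1 := by
  obtain ⟨hlo, hhi⟩ := exp_pi_mul_div_three_mem_Icc (s := 1) ⟨le_rfl, by norm_num⟩
  have key := two_mul_exp_mul_phi 1
  set u := exp (π * 1 / 3)
  have hu : 0 < u ^ 2 - u := by nlinarith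
  have hpoly : 0 < 4.618 * (u ^ 2 - u) - (u ^ 3 + 1) := by
    nlinarith [mul_nonneg (sub_nonneg.2 hlo) (sub_nonneg.2 hhi),
      mul_nonneg (mul_nonneg (sub_nonneg.2 hlo) (sub_nonneg.2 hhi)) (sub_nonneg.2 hhi)]
  have hc := mul_lt_mul_of_pos_right eight_div_sqrt_three_mem_Ioo.1 hu
  have : 0 < 2 * exp (π * 1 / 2) * φ 1 := by linarith
  exact pos_of_mul_pos_right this (by positivity)

lemma phi_one_point_zero_one_neg : φ 1.01 < 0 := by
  obtain ⟨hlo, hhi⟩ := exp_pi_mul_div_three_mem_Icc (s := 1.01) ⟨by norm_num, le_rfl⟩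
  have key := two_mul_exp_mul_phi 1.01
  set u := exp (π * 1.01 / 3)
  have hu : 0 < u ^ 2 - u := by nlinarith
  have hpoly : 4.619 * (u ^ 2 - u) - 1.01 * (u ^ 3 + 1) < 0 := by
    nlinarith [mul_nonneg (sub_nonneg.2 hlo) (sub_nonneg.2 hhi),
      mul_nonneg (mul_nonneg (sub_nonneg.2 hlo) (sub_nonneg.2 hhi)) (sub_nonneg.2 hhi)]
  have hc := mul_lt_mul_of_pos_right eight_div_sqrt_three_mem_Ioo.2 hu
  have : 2 * exp (π * 1.01 / 2) * φ 1.01 < 0 := by linarith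
  exact neg_of_mul_neg_right this (by positivity)

theorem stmt15 :
    (∃! s : ℝ, 0 < s ∧
      -s * Real.cosh (π * s / 2) + (8 / Real.sqrt 3) * Real.sinh (π * s / 6) = 0) ∧
    ∀ s : ℝ, 0 < s →
      -s * Real.cosh (π * s / 2) + (8 / Real.sqrt 3) * Real.sinh (π * s / 6) = 0 →
      1 < s ∧ s < 1.01 := by
  change (∃! s : ℝ, 0 < s ∧ φ s = 0) ∧ ∀ s : ℝ, 0 < s → φ s = 0 → 1 < s ∧ s < 1.01
  have hle {y z : ℝ} (hy : 0 < y) (hφy : φ y ≤ 0) (hφz : 0 ≤ φ z) : z ≤ y :=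
    strictConcaveOn_phi.le_of_map_nonpos_of_map_nonneg (by simp [φ]) hy hφy hφz
  have h1 := phi_one_pos
  have h101 := phi_one_point_zero_one_neg
  obtain ⟨s₀, hs₀, hφs₀⟩ : ∃ s ∈ Ioo (1 : ℝ) 1.01, φ s = 0 :=
    intermediate_value_Ioo' (by norm_num) (by unfold φ; fun_prop) ⟨h101, h1⟩
  refine ⟨⟨s₀, ⟨by linarith [hs₀.1], hφs₀⟩, fun s ⟨hs, hφs⟩ => ?_⟩, fun s hs hφs => ⟨?_, ?_⟩⟩
  · exact le_antisymm (hle (by linarith [hs₀.1]) hφs₀.le hφs.ge) (hle hs hφs.le hφs₀.ge)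
  · exact (hle hs hφs.le h1.le).lt_of_ne (by rintro rfl; linarith)
  · exact (hle (by norm_num) h101.le hφs.ge).lt_of_ne (by rintro rfl; linarith)
end
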